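/- Let Q be the soliton, L the linearized operator Lf = -f'' + f - 5Q⁴f, and R(ε) = 10Q³ε² + 10Q²ε³ + 5Qε⁴ + ε⁵. There exist δ > 0 and C such that the following holds. Let ε ∈ L²(ℝ) ∩ L⁸(ℝ) be real-valued with ‖ε‖_{L²} ≤ δ, and let a, b be real numbers satisfying the modulation equations a(∫(Q/2 + yQ_y)² dy - ∫(2yQ_y + y²Q_{yy})ε dy) - b∫(yQ_{yy} + Q_y)ε dy = ∫L(yQ_{yy} + Q_y)·ε dy - ∫R(ε)·(yQ_y) dy and -a∫ε(yQ + (7/2)y²Q_y + y³Q_{yy}) dy + b(∫(Q/2 + yQ_y)² dy - ∫(Q/2 + (5/2)yQ_y + y²Q_{yy})ε dy) = ∫L(Q/2 + (5/2)yQ_y + y²Q_{yy})·ε dy - ∫(Q/2 + (5/2)yQ_y + y²Q_{yy})R(ε) dy. Then |a| + |b| ≤ C(‖ε‖_{L²} + ‖ε‖_{L²}‖ε‖_{L⁸}⁴). (With a = λ_s/λ and b = x_s/λ - 1 these are the modulation parameter bounds.) -/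

import Mathlib

noncomputable section

open MeasureTheory Filter Topology Set
open scoped ENNReal

namespace GKdV

/-- The soliton `Q(x) = 3^{1/4} cosh(2x)^{-1/2}`. -/
def Q (x : ℝ) : ℝ := (3 : ℝ) ^ ((1 : ℝ)/4) * (Real.cosh (2 * x)) ^ (-(1 : ℝ)/2)

/-- Fourier transform (formal; junk value off integrable functions). -/
def FT (f : ℝ → ℂ) (ξ : ℝ) : ℂ :=
  ((2 * Real.pi) ^ (-(1:ℝ)/2) : ℝ) * ∫ x : ℝ, Complex.exp (-(Complex.I * x * ξ)) * f x

/-- Inverse Fourier transform (formal). -/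
def IFT (f : ℝ → ℂ) (x : ℝ) : ℂ :=
  ((2 * Real.pi) ^ (-(1:ℝ)/2) : ℝ) * ∫ ξ : ℝ, Complex.exp (Complex.I * x * ξ) * f ξ

/-- The Airy propagator `e^{-t∂_x³}`: the Fourier multiplier `e^{-itξ³}`. -/
def airyC (t : ℝ) (f : ℝ → ℂ) : ℝ → ℂ :=
  IFT fun ξ => Complex.exp (-(Complex.I * t * (ξ:ℂ)^3)) * FT f ξ

/-- The Airy propagator acting on real-valued functions. -/
def airy (t : ℝ) (f : ℝ → ℝ) : ℝ → ℝ := fun x => (airyC t (fun y => (f y : ℂ)) x).re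

/-- Mixed norm `‖u‖_{L_x^p L_t^q (I × ℝ)} = (∫_ℝ (∫_I |u(t,x)|^q dt)^{p/q} dx)^{1/p}`. -/
def mixedNorm (p q : ℝ) (I : Set ℝ) (u : ℝ → ℝ → ℝ) : ℝ≥0∞ :=
  (∫⁻ x : ℝ, (∫⁻ t in I, ENNReal.ofReal (|u t x| ^ q)) ^ (p / q)) ^ (1 / p)

/-- The mass `M(f) = ∫ f²`. -/
def mass (f : ℝ → ℝ) : ℝ := ∫ x : ℝ, (f x) ^ 2

/-- A strong solution of the focusing mass-critical gKdV equation
`u_t = -(u_{xx} + u⁵)_x` on the interval `I ∋ 0`: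
`u ∈ C_t L²_x ∩ L⁵_x L¹⁰_t (J × ℝ)` for compact `J ⊆ I`, satisfying the Duhamel formula. -/
structure IsSolution (I : Set ℝ) (u : ℝ → ℝ → ℝ) : Prop where
  zero_mem : (0:ℝ) ∈ I
  isInterval : I.OrdConnected
  memL2 : ∀ t ∈ I, MemLp (u t) 2 (volume : Measure ℝ)
  contL2 : ∀ t ∈ I, Tendsto (fun s => eLpNorm (u s - u t) 2 (volume : Measure ℝ))
      (nhdsWithin t I) (nhds 0)
  strichartz : ∀ J ⊆ I, IsCompact J → mixedNorm 5 10 J u < ⊤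
  duhamel : ∀ t ∈ I, ∀ᵐ x : ℝ, u t x = airy t (u 0) x
      - ∫ τ in (0:ℝ)..t, airy (t - τ) (fun y => deriv (fun z => (u τ z)^5) y) x

/-- A maximal-lifespan strong solution: it cannot be extended to a strictly larger interval. -/
def IsMaxSolution (I : Set ℝ) (u : ℝ → ℝ → ℝ) : Prop :=
  IsSolution I u ∧ ∀ I' u', IsSolution I' u' → I ⊆ I' → (∀ t ∈ I, u' t = u t) → I' = I

/-- The rescaled soliton `λ^{-1/2} Q((x - x₀)/λ)`. -/
def solitonResc (lam x₀ : ℝ) : ℝ → ℝ := fun x => lam ^ (-(1:ℝ)/2) * Q ((x - x₀) / lam)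

/-- The symmetry group action `g_{x₀,λ} f(x) = λ^{-1/2} f(λ^{-1}(x - x₀))`. -/
def gAct (x₀ lam : ℝ) (f : ℝ → ℝ) : ℝ → ℝ := fun x => lam ^ (-(1:ℝ)/2) * f ((x - x₀) / lam)

/-- The symmetry group action on complex-valued functions. -/
def gActC (x₀ lam : ℝ) (f : ℝ → ℂ) : ℝ → ℂ :=
  fun x => ((lam ^ (-(1:ℝ)/2) : ℝ) : ℂ) * f ((x - x₀) / lam)

/-- `u` is `δ`-close to `Q` on `I`:
`sup_{t∈I} inf_{λ₀>0, x₀} ‖u(t) - λ₀^{-1/2}Q((·-x₀)/λ₀)‖_{L²} ≤ δ`. -/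
def DeltaClose (δ : ℝ) (I : Set ℝ) (u : ℝ → ℝ → ℝ) : Prop :=
  ∀ t ∈ I, (⨅ (lam : Ioi (0:ℝ)) (x₀ : ℝ),
    eLpNorm (fun x => u t x - solitonResc (lam : ℝ) x₀ x) 2 (volume : Measure ℝ))
      ≤ ENNReal.ofReal δ

/-- `u` is almost periodic modulo symmetries on `I`, with frequency scale `N` and
spatial center `xc`: the orbit `{N(t)^{-1/2} u(t, N(t)^{-1}· + xc(t)) : t ∈ I}` is
contained in a compact subset of `L²(ℝ)`. -/
def AlmostPeriodicWith (I : Set ℝ) (u : ℝ → ℝ → ℝ) (N xc : ℝ → ℝ) : Prop :=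
  ContinuousOn N I ∧ ContinuousOn xc I ∧ (∀ t ∈ I, 0 < N t) ∧
  ∃ K : Set (Lp ℝ 2 (volume : Measure ℝ)), IsCompact K ∧
    ∀ t ∈ I, ∃ f ∈ K, ∀ᵐ x : ℝ, (f : ℝ → ℝ) x = (N t) ^ (-(1:ℝ)/2) * u t ((N t)⁻¹ * x + xc t)

/-- `u` is almost periodic modulo symmetries on `I`. -/
def AlmostPeriodic (I : Set ℝ) (u : ℝ → ℝ → ℝ) : Prop :=
  ∃ N xc : ℝ → ℝ, AlmostPeriodicWith I u N xc

/-- Weak convergence to `0` in `L²(ℝ)` of a sequence of real functions. -/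
def WeakToZero (f : ℕ → ℝ → ℝ) : Prop :=
  ∀ φ : ℝ → ℝ, MemLp φ 2 (volume : Measure ℝ) →
    Tendsto (fun n => ∫ x : ℝ, f n x * φ x) atTop (nhds 0)

/-- Weak convergence to `0` in `L²(ℝ;ℂ)`. -/
def WeakToZeroC (f : ℕ → ℝ → ℂ) : Prop :=
  ∀ φ : ℝ → ℂ, MemLp φ 2 (volume : Measure ℝ) →
    Tendsto (fun n => ∫ x : ℝ, f n x * (starRingEnd ℂ) (φ x)) atTop (nhds 0)

/-- Japanese bracket `⟨x⟩ = (1 + x²)^{1/2}`. -/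
def jb (x : ℝ) : ℝ := Real.sqrt (1 + x ^ 2)

/-- Asymptotic orthogonality of two parameter sequences `(λ, ξ, x, t)`. -/
def AsympOrth (l1 xi1 x1 t1 l2 xi2 x2 t2 : ℕ → ℝ) : Prop :=
  Tendsto (fun n =>
    l1 n / l2 n + l2 n / l1 n + Real.sqrt (l1 n * l2 n) * |xi1 n - xi2 n|
    + Real.sqrt (jb (l1 n * xi1 n * (l2 n * xi2 n))) *
        |((l1 n)^3 * t1 n - (l2 n)^3 * t2 n) / (l1 n * l2 n) ^ ((3:ℝ)/2)|
    + (l1 n * l2 n) ^ (-(1:ℝ)/2) *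
        |x1 n - x2 n + (3/2) * ((l1 n)^3 * t1 n - (l2 n)^3 * t2 n) * ((xi1 n)^2 + (xi2 n)^2)|)
    atTop atTop

/-- A parameter sequence `Γ_n = (λ_n, ξ_n, x_n, t_n)` tends to `∞`. -/
def GammaToInfty (l xi x t : ℕ → ℝ) : Prop :=
  Tendsto (fun n => l n + (l n)⁻¹ + |xi n| + |t n| + |x n|) atTop atTop

/-- The linear profile piece `g_{x₀,λ} e^{-t₀∂_x³} Re[e^{ixξλ} φ]`. -/
def profilePiece (lam xi x0 t0 : ℝ) (φ : ℝ → ℂ) : ℝ → ℝ :=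
  gAct x0 lam (airy t0 (fun x => (Complex.exp (Complex.I * x * (xi * lam)) * φ x).re))

/-- The linearized operator `L f = -f'' + f - 5Q⁴ f`. -/
def Lop (f : ℝ → ℝ) : ℝ → ℝ := fun y => -(deriv (deriv f)) y + f y - 5 * (Q y)^4 * f y

/-- The nonlinear remainder `R(ε) = 10Q³ε² + 10Q²ε³ + 5Qε⁴ + ε⁵`. -/
def Rop (e : ℝ → ℝ) : ℝ → ℝ :=
  fun y => 10 * (Q y)^3 * (e y)^2 + 10 * (Q y)^2 * (e y)^3 + 5 * Q y * (e y)^4 + (e y)^5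

/-!
The modulation equations form a `2 × 2` linear system for `(a, b)` whose diagonal entries are
`∫ (ΛQ)² > 0`, where `ΛQ = Q/2 + yQ'`, and whose off-diagonal perturbations are integrals of `ε`
against weights `yᵏ Q⁽ʲ⁾`. From `Q' = -Q tanh 2y` and `Q⁴ = 3 sech² 2y` every derivative of `Q`
is `O(Q)` and `Q ≤ 2e^{-|y|}`, so all weights decay rapidly and lie in `L²`; by Cauchy–Schwarz the
perturbations are `O(‖ε‖₂)`, hence small for small `δ`, and the system is diagonally dominant.
On the right-hand side the linear terms are `O(‖ε‖₂)` for the same reason, and the nonlinear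
ones are `O(‖ε‖₂² + ‖ε‖₂‖ε‖₈⁴)` since `|R(ε)| ≲ ε² + |ε|⁵` and `∫ |ε|⁵ ≤ ‖ε‖₂ ‖|ε|⁴‖₂`.
-/

open Real

lemma pow_le_pow_add_pow {t : ℝ} (ht : 0 ≤ t) {a k b : ℕ} (hak : a ≤ k) (hkb : k ≤ b) :
    t ^ k ≤ t ^ a + t ^ b := by
  rcases le_total t 1 with h | h
  · linarith [pow_le_pow_of_le_one ht h hak, pow_nonneg ht b]
  · linarith [pow_le_pow_right₀ h hkb, pow_nonneg ht a]

lemma abs_add_abs_le_of_almost_diagonal {a b c j₁ j₂ j₃ j₄ r₁ r₂ ρ : ℝ} (hc : 0 < c)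
    (hj₁ : |j₁| ≤ c / 4) (hj₂ : |j₂| ≤ c / 4) (hj₃ : |j₃| ≤ c / 4) (hj₄ : |j₄| ≤ c / 4)
    (hr₁ : |r₁| ≤ ρ) (hr₂ : |r₂| ≤ ρ)
    (h₁ : a * (c - j₁) - b * j₂ = r₁) (h₂ : -(a * j₃) + b * (c - j₄) = r₂) :
    |a| + |b| ≤ 4 * ρ / c := by
  have ha : |a| * c ≤ ρ + (|a| + |b|) * (c / 4) := by
    calc |a| * c = |r₁ + a * j₁ + b * j₂| := by
          rw [← abs_of_pos hc, ← abs_mul]; congr 1; linarith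
      _ ≤ |r₁| + |a| * |j₁| + |b| * |j₂| := by
          simpa only [abs_mul] using abs_add_three r₁ (a * j₁) (b * j₂)
      _ ≤ ρ + (|a| + |b|) * (c / 4) := by
          nlinarith [mul_le_mul_of_nonneg_left hj₁ (abs_nonneg a),
            mul_le_mul_of_nonneg_left hj₂ (abs_nonneg b)]
  have hb : |b| * c ≤ ρ + (|a| + |b|) * (c / 4) := by
    calc |b| * c = |r₂ + a * j₃ + b * j₄| := by
          rw [← abs_of_pos hc, ← abs_mul]; congr 1; linarith
      _ ≤ |r₂| + |a| * |j₃| + |b| * |j₄| := by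
          simpa only [abs_mul] using abs_add_three r₂ (a * j₃) (b * j₄)
      _ ≤ ρ + (|a| + |b|) * (c / 4) := by
          nlinarith [mul_le_mul_of_nonneg_left hj₃ (abs_nonneg a),
            mul_le_mul_of_nonneg_left hj₄ (abs_nonneg b)]
  rw [le_div_iff₀ hc]
  linarith

section Lebesgue

variable {α E : Type*} [MeasurableSpace α] {μ : Measure α} [NormedAddCommGroup E]

lemma integral_norm_mul_norm_le_eLpNorm_mul_eLpNorm {f g : α → E} (hf : MemLp f 2 μ)
    (hg : MemLp g 2 μ) :
    ∫ x, ‖f x‖ * ‖g x‖ ∂μ ≤ (eLpNorm f 2 μ).toReal * (eLpNorm g 2 μ).toReal := by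
  have h := integral_mul_norm_le_Lp_mul_Lq Real.HolderConjugate.two_two
    (by simpa using hf) (by simpa using hg)
  rw [hf.eLpNorm_eq_integral_rpow_norm two_ne_zero ENNReal.ofNat_ne_top,
    hg.eLpNorm_eq_integral_rpow_norm two_ne_zero ENNReal.ofNat_ne_top,
    ENNReal.toReal_ofReal (by positivity), ENNReal.toReal_ofReal (by positivity)]
  simpa using h

lemma abs_integral_mul_le_eLpNorm_mul_eLpNorm {f g : α → ℝ} (hf : MemLp f 2 μ)
    (hg : MemLp g 2 μ) :
    |∫ x, f x * g x ∂μ| ≤ (eLpNorm f 2 μ).toReal * (eLpNorm g 2 μ).toReal :=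
  abs_integral_le_integral_abs.trans <| by
    simpa only [abs_mul, Real.norm_eq_abs] using
      integral_norm_mul_norm_le_eLpNorm_mul_eLpNorm hf hg

lemma exists_forall_abs_integral_mul_le (ws : List (α → ℝ)) (hws : ∀ w ∈ ws, MemLp w 2 μ) :
    ∃ K, 0 < K ∧ ∀ w ∈ ws, ∀ ε : α → ℝ, MemLp ε 2 μ →
      |∫ x, w x * ε x ∂μ| ≤ K * (eLpNorm ε 2 μ).toReal := by
  induction ws with
  | nil => exact ⟨1, one_pos, by simp⟩
  | cons w ws ih =>
    obtain ⟨K, hK, hKws⟩ := ih fun v hv => hws v (List.mem_cons_of_mem w hv)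
    refine ⟨K + (eLpNorm w 2 μ).toReal, by positivity, ?_⟩
    rintro v hv ε hε
    have hε0 : 0 ≤ (eLpNorm ε 2 μ).toReal := ENNReal.toReal_nonneg
    rcases List.mem_cons.1 hv with rfl | hv
    · exact (abs_integral_mul_le_eLpNorm_mul_eLpNorm (hws v (by simp)) hε).trans
        (mul_le_mul_of_nonneg_right (by linarith) hε0)
    · exact (hKws v hv ε hε).trans (mul_le_mul_of_nonneg_right (by simp) hε0)

lemma eLpNorm_norm_pow (f : α → E) (p : ℝ≥0∞) {n : ℕ} (hn : n ≠ 0) :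
    eLpNorm (fun x => ‖f x‖ ^ n) p μ = eLpNorm f (p * n) μ ^ n := by
  have h := eLpNorm_norm_rpow f (p := p) (μ := μ) (Nat.cast_pos.2 (Nat.pos_of_ne_zero hn))
  simpa only [Real.rpow_natCast, ENNReal.ofReal_natCast, ENNReal.rpow_natCast] using h

lemma memLp_norm_pow {f : α → E} {p : ℝ≥0∞} {n : ℕ} (hn : n ≠ 0) (hf : MemLp f (p * n) μ) :
    MemLp (fun x => ‖f x‖ ^ n) p μ :=
  ⟨hf.1.norm.pow n, by rw [eLpNorm_norm_pow f p hn]; exact ENNReal.pow_lt_top hf.2⟩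

end Lebesgue

def RapidDecay (f : ℝ → ℝ) : Prop := ∀ n : ℕ, ∃ C, ∀ x, |x| ^ n * |f x| ≤ C

namespace RapidDecay

variable {f g : ℝ → ℝ}

lemma congr (hf : RapidDecay f) (h : ∀ x, f x = g x) : RapidDecay g :=
  funext h ▸ hf

lemma of_abs_le (hf : RapidDecay f) {c : ℝ} (h : ∀ x, |g x| ≤ c * |f x|) : RapidDecay g := by
  intro n
  obtain ⟨C, hC⟩ := hf n
  refine ⟨|c| * C, fun x => ?_⟩
  calc |x| ^ n * |g x| ≤ |x| ^ n * (|c| * |f x|) :=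
        mul_le_mul_of_nonneg_left ((h x).trans (by gcongr; exact le_abs_self c)) (by positivity)
    _ = |c| * (|x| ^ n * |f x|) := by ring
    _ ≤ |c| * C := mul_le_mul_of_nonneg_left (hC x) (abs_nonneg c)

lemma add (hf : RapidDecay f) (hg : RapidDecay g) : RapidDecay fun x => f x + g x := by
  intro n
  obtain ⟨C, hC⟩ := hf n
  obtain ⟨D, hD⟩ := hg n
  refine ⟨C + D, fun x => ?_⟩
  calc |x| ^ n * |f x + g x| ≤ |x| ^ n * |f x| + |x| ^ n * |g x| := by
        rw [← mul_add]; exact mul_le_mul_of_nonneg_left (abs_add_le _ _) (by positivity)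
    _ ≤ C + D := add_le_add (hC x) (hD x)

lemma const_mul (hf : RapidDecay f) (c : ℝ) : RapidDecay fun x => c * f x :=
  hf.of_abs_le fun x => (abs_mul c (f x)).le

lemma sub (hf : RapidDecay f) (hg : RapidDecay g) : RapidDecay fun x => f x - g x :=
  (hf.add (hg.const_mul (-1))).congr fun x => by ring

lemma mul_of_abs_le (hf : RapidDecay f) {M : ℝ} (hg : ∀ x, |g x| ≤ M) :
    RapidDecay fun x => g x * f x :=
  hf.of_abs_le fun x => by rw [abs_mul]; exact mul_le_mul_of_nonneg_right (hg x) (abs_nonneg _)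

lemma pow_mul (hf : RapidDecay f) (k : ℕ) : RapidDecay fun x => x ^ k * f x := by
  intro n
  obtain ⟨C, hC⟩ := hf (n + k)
  exact ⟨C, fun x => by rw [abs_mul, abs_pow, ← mul_assoc, ← pow_add]; exact hC x⟩

lemma abs_le_const (hf : RapidDecay f) : ∃ M, ∀ x, |f x| ≤ M := by
  simpa using hf 0

lemma memLp_two (hf : RapidDecay f) (hc : Continuous f) : MemLp f 2 volume := by
  obtain ⟨M, hM⟩ := hf.abs_le_const
  obtain ⟨C, hC⟩ := hf 2
  rw [memLp_two_iff_integrable_sq hc.aestronglyMeasurable]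
  refine (integrable_inv_one_add_sq.const_mul (M * (M + C))).mono'
    (hc.pow 2).aestronglyMeasurable (Eventually.of_forall fun x => ?_)
  have hdecay : |f x| ≤ (M + C) * (1 + x ^ 2)⁻¹ := by
    have hCx := hC x
    rw [sq_abs] at hCx
    rw [← div_eq_mul_inv, le_div_iff₀ (by positivity)]
    linarith [hM x]
  rw [Real.norm_eq_abs, abs_pow, sq, mul_assoc]
  exact mul_le_mul (hM x) hdecay (abs_nonneg _) ((abs_nonneg _).trans (hM x))

end RapidDecay

lemma Q_pos (x : ℝ) : 0 < Q x := by unfold Q; positivity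

lemma Q_pow_four (x : ℝ) : Q x ^ 4 = 3 / cosh (2 * x) ^ 2 := by
  have hc := cosh_pos (2 * x)
  rw [Q, mul_pow, ← Real.rpow_natCast, ← Real.rpow_natCast (cosh _ ^ _),
    ← Real.rpow_mul (by norm_num), ← Real.rpow_mul hc.le]
  norm_num
  ring

lemma Q_pow_four_le (x : ℝ) : Q x ^ 4 ≤ 3 := by
  rw [Q_pow_four, div_le_iff₀ (by positivity)]
  nlinarith [one_le_cosh (2 * x)]

lemma Q_le_two (x : ℝ) : Q x ≤ 2 :=
  (pow_le_pow_iff_left₀ (Q_pos x).le zero_le_two four_ne_zero).1 (by linarith [Q_pow_four_le x])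

lemma Q_le_two_mul_exp_neg_abs (x : ℝ) : Q x ≤ 2 * exp (-|x|) := by
  have hu := exp_pos |x|
  have hc : exp |x| ^ 2 / 2 ≤ cosh (2 * x) := by
    rw [← cosh_abs, abs_mul, abs_two, cosh_eq, ← exp_nat_mul]
    push_cast
    linarith [exp_pos (-(2 * |x|))]
  have h4 : Q x ^ 4 ≤ (2 * exp (-|x|)) ^ 4 := by
    rw [Q_pow_four, exp_neg, div_le_iff₀ (by positivity)]
    field_simp
    nlinarith [pow_le_pow_left₀ (by positivity) hc 2]
  exact (pow_le_pow_iff_left₀ (Q_pos x).le (by positivity) four_ne_zero).1 h4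

-- Closed forms of `Q', …, Q⁽⁴⁾`; that `d2Q` is `Q''` is the soliton equation `Q'' = Q - Q⁵`.
def dQ (x : ℝ) : ℝ := -(Q x * tanh (2 * x))

def d2Q (x : ℝ) : ℝ := Q x - Q x ^ 5

def d3Q (x : ℝ) : ℝ := dQ x * (1 - 5 * Q x ^ 4)

def d4Q (x : ℝ) : ℝ := d2Q x * (1 - 5 * Q x ^ 4) - 20 * Q x ^ 3 * dQ x ^ 2

lemma hasDerivAt_Q (x : ℝ) : HasDerivAt Q (dQ x) x := by
  have hc := cosh_pos (2 * x)
  have h := ((((hasDerivAt_id x).const_mul 2).cosh).rpow_const (p := -(1:ℝ)/2)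
    (Or.inl hc.ne')).const_mul ((3:ℝ) ^ ((1:ℝ)/4))
  refine h.congr_deriv ?_
  simp only [dQ, Q, id, tanh_eq_sinh_div_cosh, Real.rpow_sub_one hc.ne']
  field_simp

lemma hasDerivAt_tanh_two_mul (x : ℝ) :
    HasDerivAt (fun x => tanh (2 * x)) (2 / cosh (2 * x) ^ 2) x := by
  have hc := cosh_pos (2 * x)
  have h := (((hasDerivAt_id x).const_mul 2).sinh).div
    (((hasDerivAt_id x).const_mul 2).cosh) hc.ne'
  simp only [id] at h
  refine (h.congr_deriv ?_).congr_of_eventuallyEq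
    (Eventually.of_forall fun y => tanh_eq_sinh_div_cosh _)
  field_simp
  linear_combination cosh_sq (2 * x)

lemma hasDerivAt_dQ (x : ℝ) : HasDerivAt dQ (d2Q x) x := by
  have hc := cosh_pos (2 * x)
  refine ((hasDerivAt_Q x).mul (hasDerivAt_tanh_two_mul x)).neg.congr_deriv ?_
  simp only [d2Q, dQ, pow_succ _ 4, Q_pow_four, tanh_eq_sinh_div_cosh]
  field_simp
  linear_combination (Q x) * sinh_sq (2 * x)

lemma hasDerivAt_d2Q (x : ℝ) : HasDerivAt d2Q (d3Q x) x := by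
  refine ((hasDerivAt_Q x).sub ((hasDerivAt_Q x).pow 5)).congr_deriv ?_
  simp only [d3Q]
  ring

lemma hasDerivAt_d3Q (x : ℝ) : HasDerivAt d3Q (d4Q x) x := by
  refine ((hasDerivAt_dQ x).mul
    ((((hasDerivAt_Q x).pow 4).const_mul 5).const_sub 1)).congr_deriv ?_
  simp only [d4Q, Pi.pow_apply]
  ring

lemma deriv_Q : deriv Q = dQ := funext fun x => (hasDerivAt_Q x).deriv

lemma deriv_dQ : deriv dQ = d2Q := funext fun x => (hasDerivAt_dQ x).deriv

@[fun_prop]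
lemma continuous_Q : Continuous Q :=
  continuous_iff_continuousAt.2 fun x => (hasDerivAt_Q x).continuousAt

@[fun_prop]
lemma continuous_dQ : Continuous dQ :=
  continuous_iff_continuousAt.2 fun x => (hasDerivAt_dQ x).continuousAt

@[fun_prop]
lemma continuous_d2Q : Continuous d2Q :=
  continuous_iff_continuousAt.2 fun x => (hasDerivAt_d2Q x).continuousAt

@[fun_prop]
lemma continuous_d3Q : Continuous d3Q :=
  continuous_iff_continuousAt.2 fun x => (hasDerivAt_d3Q x).continuousAt

@[fun_prop]
lemma continuous_d4Q : Continuous d4Q := by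
  unfold d4Q
  fun_prop

lemma abs_dQ_le (x : ℝ) : |dQ x| ≤ Q x := by
  rw [dQ, abs_neg, abs_mul, abs_of_pos (Q_pos x)]
  exact mul_le_of_le_one_right (Q_pos x).le (abs_tanh_lt_one _).le

lemma abs_d2Q_le (x : ℝ) : |d2Q x| ≤ 2 * Q x := by
  have h4 := Q_pow_four_le x
  have hQ := Q_pos x
  rw [d2Q, abs_le]
  constructor <;> nlinarith [pow_nonneg hQ.le 4]

lemma abs_one_sub_five_mul_Q_pow_four_le (x : ℝ) : |1 - 5 * Q x ^ 4| ≤ 14 := by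
  have := Q_pow_four_le x
  rw [abs_le]
  constructor <;> nlinarith [pow_nonneg (Q_pos x).le 4]

lemma abs_d3Q_le (x : ℝ) : |d3Q x| ≤ 14 * Q x := by
  rw [d3Q, abs_mul, mul_comm 14]
  exact mul_le_mul (abs_dQ_le x) (abs_one_sub_five_mul_Q_pow_four_le x) (abs_nonneg _)
    (Q_pos x).le

lemma abs_d4Q_le (x : ℝ) : |d4Q x| ≤ 88 * Q x := by
  have hQ := Q_pos x
  have h1 : |d2Q x * (1 - 5 * Q x ^ 4)| ≤ 28 * Q x := by
    rw [abs_mul]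
    nlinarith [abs_d2Q_le x, abs_one_sub_five_mul_Q_pow_four_le x, abs_nonneg (d2Q x),
      abs_nonneg (1 - 5 * Q x ^ 4)]
  have h2 : |20 * Q x ^ 3 * dQ x ^ 2| ≤ 60 * Q x := by
    have hd : dQ x ^ 2 ≤ Q x ^ 2 :=
      sq_le_sq' (abs_le.1 (abs_dQ_le x)).1 (abs_le.1 (abs_dQ_le x)).2
    rw [abs_of_nonneg (by positivity)]
    nlinarith [Q_pow_four_le x, pow_pos hQ 3]
  exact (abs_sub _ _).trans (by linarith)

lemma rapidDecay_Q : RapidDecay Q := by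
  intro n
  refine ⟨2 * n.factorial, fun x => ?_⟩
  have hpow : |x| ^ n ≤ n.factorial * exp |x| := by
    have := pow_div_factorial_le_exp |x| (abs_nonneg x) n
    rwa [div_le_iff₀ (by positivity), mul_comm] at this
  calc |x| ^ n * |Q x| ≤ (n.factorial * exp |x|) * (2 * exp (-|x|)) := by
        rw [abs_of_pos (Q_pos x)]
        exact mul_le_mul hpow (Q_le_two_mul_exp_neg_abs x) (Q_pos x).le (by positivity)
    _ = 2 * n.factorial := by rw [mul_mul_mul_comm, ← exp_add, add_neg_cancel, exp_zero]; ring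

lemma rapidDecay_dQ : RapidDecay dQ :=
  rapidDecay_Q.of_abs_le (c := 1) fun x => by
    rw [abs_of_pos (Q_pos x), one_mul]; exact abs_dQ_le x

lemma rapidDecay_d2Q : RapidDecay d2Q :=
  rapidDecay_Q.of_abs_le (c := 2) fun x => by rw [abs_of_pos (Q_pos x)]; exact abs_d2Q_le x

lemma rapidDecay_d3Q : RapidDecay d3Q :=
  rapidDecay_Q.of_abs_le (c := 14) fun x => by rw [abs_of_pos (Q_pos x)]; exact abs_d3Q_le x

lemma rapidDecay_d4Q : RapidDecay d4Q :=
  rapidDecay_Q.of_abs_le (c := 88) fun x => by rw [abs_of_pos (Q_pos x)]; exact abs_d4Q_le x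

-- The weights `yQ'' + Q' = (yQ')'` and `Q/2 + 5/2 yQ' + y²Q'' = (y ΛQ)'`.
lemma rapidDecay_deriv_mul_dQ : RapidDecay fun y => y * d2Q y + dQ y :=
  ((rapidDecay_d2Q.pow_mul 1).add rapidDecay_dQ).congr fun y => by ring

lemma rapidDecay_deriv_mul_LambdaQ :
    RapidDecay fun y => Q y / 2 + 5 / 2 * y * dQ y + y ^ 2 * d2Q y :=
  (((rapidDecay_Q.const_mul (1 / 2)).add ((rapidDecay_dQ.pow_mul 1).const_mul (5 / 2))).add
    (rapidDecay_d2Q.pow_mul 2)).congr fun y => by ring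

lemma integral_sq_LambdaQ_pos : 0 < ∫ y : ℝ, (Q y / 2 + y * deriv Q y) ^ 2 := by
  rw [deriv_Q]
  have hdecay : RapidDecay fun y => Q y / 2 + y * dQ y :=
    ((rapidDecay_Q.const_mul (1 / 2)).add (rapidDecay_dQ.pow_mul 1)).congr fun y => by ring
  refine integral_pos_of_integrable_nonneg_nonzero (x := 0) (by fun_prop)
    (hdecay.memLp_two (by fun_prop)).integrable_sq (fun y => sq_nonneg _) ?_
  simp [(Q_pos 0).ne']

lemma Lop_eq_of_hasDerivAt {f f' f'' : ℝ → ℝ} (hf : ∀ x, HasDerivAt f (f' x) x)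
    (hf' : ∀ x, HasDerivAt f' (f'' x) x) :
    Lop f = fun x => -f'' x + f x - 5 * Q x ^ 4 * f x := by
  have h1 : deriv f = f' := funext fun x => (hf x).deriv
  have h2 : deriv f' = f'' := funext fun x => (hf' x).deriv
  funext x
  simp only [Lop, h1, h2]

lemma memLp_Lop {f f' f'' : ℝ → ℝ} (hf : ∀ x, HasDerivAt f (f' x) x)
    (hf' : ∀ x, HasDerivAt f' (f'' x) x) (hfd : RapidDecay f) (hf''d : RapidDecay f'')
    (hf''c : Continuous f'') : MemLp (Lop f) 2 volume := by
  have hfc : Continuous f := continuous_iff_continuousAt.2 fun x => (hf x).continuousAt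
  have hQ4 : ∀ x, |5 * Q x ^ 4| ≤ 15 := fun x => by
    rw [abs_of_nonneg (by positivity)]; linarith [Q_pow_four_le x]
  rw [Lop_eq_of_hasDerivAt hf hf']
  refine RapidDecay.memLp_two ?_ (by fun_prop)
  exact ((hf''d.const_mul (-1)).add hfd |>.sub (hfd.mul_of_abs_le hQ4)).congr fun x => by ring

lemma memLp_Lop_deriv_mul_dQ : MemLp (Lop fun y => y * d2Q y + dQ y) 2 volume := by
  refine memLp_Lop (f' := fun y => 2 * d2Q y + y * d3Q y)
    (f'' := fun y => 3 * d3Q y + y * d4Q y) (fun x => ?_) (fun x => ?_)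
    rapidDecay_deriv_mul_dQ ?_ (by fun_prop)
  · exact (((hasDerivAt_id x).mul (hasDerivAt_d2Q x)).add (hasDerivAt_dQ x)).congr_deriv
      (by simp; ring)
  · exact (((hasDerivAt_d2Q x).const_mul 2).add
      ((hasDerivAt_id x).mul (hasDerivAt_d3Q x))).congr_deriv (by simp; ring)
  · exact ((rapidDecay_d3Q.const_mul 3).add (rapidDecay_d4Q.pow_mul 1)).congr fun y => by ring

lemma memLp_Lop_deriv_mul_LambdaQ :
    MemLp (Lop fun y => Q y / 2 + 5 / 2 * y * dQ y + y ^ 2 * d2Q y) 2 volume := by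
  refine memLp_Lop (f' := fun y => 3 * dQ y + 9 / 2 * y * d2Q y + y ^ 2 * d3Q y)
    (f'' := fun y => 15 / 2 * d2Q y + 13 / 2 * y * d3Q y + y ^ 2 * d4Q y) (fun x => ?_)
    (fun x => ?_) rapidDecay_deriv_mul_LambdaQ ?_ (by fun_prop)
  · exact ((((hasDerivAt_Q x).div_const 2).add (((hasDerivAt_id x).const_mul (5 / 2)).mul
      (hasDerivAt_dQ x))).add ((hasDerivAt_pow 2 x).mul (hasDerivAt_d2Q x))).congr_deriv
      (by simp; ring)
  · exact ((((hasDerivAt_dQ x).const_mul 3).add (((hasDerivAt_id x).const_mul (9 / 2)).mul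
      (hasDerivAt_d2Q x))).add ((hasDerivAt_pow 2 x).mul (hasDerivAt_d3Q x))).congr_deriv
      (by simp; ring)
  · exact (((rapidDecay_d2Q.const_mul (15 / 2)).add
      ((rapidDecay_d3Q.pow_mul 1).const_mul (13 / 2))).add
      (rapidDecay_d4Q.pow_mul 2)).congr fun y => by ring

lemma abs_Rop_le (e : ℝ → ℝ) (x : ℝ) : |Rop e x| ≤ 130 * (|e x| ^ 2 + |e x| ^ 5) := by
  have hq := Q_pos x
  have hq2 := Q_le_two x
  have ht := abs_nonneg (e x)
  have h3 := pow_le_pow_add_pow ht (show 2 ≤ 3 by norm_num) (show 3 ≤ 5 by norm_num)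
  have h4 := pow_le_pow_add_pow ht (show 2 ≤ 4 by norm_num) (show 4 ≤ 5 by norm_num)
  have hsum : |Rop e x| ≤ 10 * Q x ^ 3 * |e x| ^ 2 + 10 * Q x ^ 2 * |e x| ^ 3
      + 5 * Q x * |e x| ^ 4 + |e x| ^ 5 := by
    refine (abs_add_le _ _).trans (add_le_add_left (abs_add_three _ _ _) _) |>.trans_eq ?_
    simp only [abs_mul, abs_pow, abs_of_pos hq, abs_of_pos (show (0 : ℝ) < 10 by norm_num),
      abs_of_pos (show (0 : ℝ) < 5 by norm_num)]
  have hq3 : Q x ^ 3 ≤ 8 := by nlinarith [pow_le_pow_left₀ hq.le hq2 3]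
  have hq2' : Q x ^ 2 ≤ 4 := by nlinarith [pow_le_pow_left₀ hq.le hq2 2]
  linarith [mul_le_mul_of_nonneg_right hq3 (pow_nonneg ht 2),
    mul_le_mul_of_nonneg_right hq2' (pow_nonneg ht 3),
    mul_le_mul_of_nonneg_right hq2 (pow_nonneg ht 4), pow_nonneg ht 5]

lemma abs_integral_mul_Rop_le {v ε : ℝ → ℝ} {M : ℝ} (hv : ∀ x, |v x| ≤ M)
    (h2 : MemLp ε 2 volume) (h8 : MemLp ε 8 volume) :
    |∫ x, v x * Rop ε x| ≤ 130 * M * ((eLpNorm ε 2 volume).toReal ^ 2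
      + (eLpNorm ε 2 volume).toReal * (eLpNorm ε 8 volume).toReal ^ 4) := by
  have hM : 0 ≤ M := (abs_nonneg _).trans (hv 0)
  have h4 : MemLp (fun x => ‖ε x‖ ^ 4) 2 volume := memLp_norm_pow four_ne_zero (by norm_num [h8])
  set N₂ := (eLpNorm ε 2 volume).toReal
  set N₈ := (eLpNorm ε 8 volume).toReal
  have hsq : ∫ x, ‖ε x‖ * ‖ε x‖ ≤ N₂ * N₂ :=
    integral_norm_mul_norm_le_eLpNorm_mul_eLpNorm h2 h2
  have hfifth : ∫ x, ‖ε x‖ * ‖ε x‖ ^ 4 ≤ N₂ * N₈ ^ 4 := by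
    have h := integral_norm_mul_norm_le_eLpNorm_mul_eLpNorm h2 h4
    simp only [norm_pow, norm_norm] at h
    have h8' : (2 : ℝ≥0∞) * (4 : ℕ) = 8 := by norm_num
    rwa [eLpNorm_norm_pow ε 2 four_ne_zero, ENNReal.toReal_pow, h8'] at h
  have hint2 : Integrable (fun x => ‖ε x‖ * ‖ε x‖) volume := h2.norm.integrable_mul h2.norm
  have hint5 : Integrable (fun x => ‖ε x‖ * ‖ε x‖ ^ 4) volume := h2.norm.integrable_mul h4
  calc |∫ x, v x * Rop ε x| ≤ ∫ x, |v x * Rop ε x| := abs_integral_le_integral_abs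
    _ ≤ ∫ x, 130 * M * (‖ε x‖ * ‖ε x‖ + ‖ε x‖ * ‖ε x‖ ^ 4) := by
        refine integral_mono_of_nonneg (Eventually.of_forall fun x => abs_nonneg _)
          ((hint2.add hint5).const_mul _) (Eventually.of_forall fun x => ?_)
        calc |v x * Rop ε x| ≤ M * (130 * (|ε x| ^ 2 + |ε x| ^ 5)) := by
              rw [abs_mul]; exact mul_le_mul (hv x) (abs_Rop_le ε x) (abs_nonneg _) hM
          _ = _ := by simp only [Real.norm_eq_abs]; ring
    _ = 130 * M * ((∫ x, ‖ε x‖ * ‖ε x‖) + ∫ x, ‖ε x‖ * ‖ε x‖ ^ 4) := by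
        rw [integral_const_mul, integral_add hint2 hint5]
    _ ≤ 130 * M * (N₂ ^ 2 + N₂ * N₈ ^ 4) := by
        rw [sq]
        gcongr

lemma exists_bound_linear_terms : ∃ K, 0 < K ∧ ∀ ε : ℝ → ℝ, MemLp ε 2 volume →
    |∫ y : ℝ, (2 * y * deriv Q y + y ^ 2 * deriv (deriv Q) y) * ε y|
      ≤ K * (eLpNorm ε 2 volume).toReal ∧
    |∫ y : ℝ, (y * deriv (deriv Q) y + deriv Q y) * ε y| ≤ K * (eLpNorm ε 2 volume).toReal ∧
    |∫ y : ℝ, ε y * (y * Q y + (7/2) * y ^ 2 * deriv Q y + y ^ 3 * deriv (deriv Q) y)|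
      ≤ K * (eLpNorm ε 2 volume).toReal ∧
    |∫ y : ℝ, (Q y / 2 + (5/2) * y * deriv Q y + y ^ 2 * deriv (deriv Q) y) * ε y|
      ≤ K * (eLpNorm ε 2 volume).toReal ∧
    |∫ y : ℝ, Lop (fun z => z * deriv (deriv Q) z + deriv Q z) y * ε y|
      ≤ K * (eLpNorm ε 2 volume).toReal ∧
    |∫ y : ℝ, Lop (fun z => Q z / 2 + (5/2) * z * deriv Q z + z ^ 2 * deriv (deriv Q) z) y
      * ε y| ≤ K * (eLpNorm ε 2 volume).toReal := by
  simp only [deriv_Q, deriv_dQ]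
  have hJ₁ : RapidDecay fun y => 2 * y * dQ y + y ^ 2 * d2Q y :=
    (((rapidDecay_dQ.pow_mul 1).const_mul 2).add (rapidDecay_d2Q.pow_mul 2)).congr
      fun y => by ring
  have hJ₃ : RapidDecay fun y => y * Q y + 7 / 2 * y ^ 2 * dQ y + y ^ 3 * d2Q y :=
    (((rapidDecay_Q.pow_mul 1).add ((rapidDecay_dQ.pow_mul 2).const_mul (7 / 2))).add
      (rapidDecay_d2Q.pow_mul 3)).congr fun y => by ring
  obtain ⟨K, hK, hbound⟩ := exists_forall_abs_integral_mul_le (μ := volume)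
    [fun y => 2 * y * dQ y + y ^ 2 * d2Q y, fun y => y * d2Q y + dQ y,
      fun y => y * Q y + 7 / 2 * y ^ 2 * dQ y + y ^ 3 * d2Q y,
      fun y => Q y / 2 + 5 / 2 * y * dQ y + y ^ 2 * d2Q y,
      Lop fun y => y * d2Q y + dQ y, Lop fun y => Q y / 2 + 5 / 2 * y * dQ y + y ^ 2 * d2Q y]
    (by
      simp only [List.forall_mem_cons, List.not_mem_nil, IsEmpty.forall_iff, implies_true,
        and_true]
      exact ⟨hJ₁.memLp_two (by fun_prop), rapidDecay_deriv_mul_dQ.memLp_two (by fun_prop),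
        hJ₃.memLp_two (by fun_prop), rapidDecay_deriv_mul_LambdaQ.memLp_two (by fun_prop),
        memLp_Lop_deriv_mul_dQ, memLp_Lop_deriv_mul_LambdaQ⟩)
  refine ⟨K, hK, fun ε hε => ⟨hbound _ (by simp) ε hε, hbound _ (by simp) ε hε, ?_,
    hbound _ (by simp) ε hε, hbound _ (by simp) ε hε, hbound _ (by simp) ε hε⟩⟩
  simpa only [mul_comm (ε _)] using hbound _ (by simp) ε hε

lemma exists_bound_nonlinear_terms : ∃ M, 0 ≤ M ∧ ∀ ε : ℝ → ℝ,
    MemLp ε 2 volume → MemLp ε 8 volume →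
    |∫ y : ℝ, Rop ε y * (y * deriv Q y)| ≤ M * ((eLpNorm ε 2 volume).toReal ^ 2
      + (eLpNorm ε 2 volume).toReal * (eLpNorm ε 8 volume).toReal ^ 4) ∧
    |∫ y : ℝ, (Q y / 2 + (5/2) * y * deriv Q y + y ^ 2 * deriv (deriv Q) y) * Rop ε y|
      ≤ M * ((eLpNorm ε 2 volume).toReal ^ 2
        + (eLpNorm ε 2 volume).toReal * (eLpNorm ε 8 volume).toReal ^ 4) := by
  simp only [deriv_Q, deriv_dQ]
  obtain ⟨B₁, hB₁⟩ := (rapidDecay_dQ.pow_mul 1).abs_le_const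
  obtain ⟨B₂, hB₂⟩ := rapidDecay_deriv_mul_LambdaQ.abs_le_const
  have hB : 0 ≤ max B₁ B₂ := (abs_nonneg _).trans ((hB₁ 0).trans (le_max_left _ _))
  refine ⟨130 * max B₁ B₂, by positivity, fun ε h2 h8 => ⟨?_, ?_⟩⟩
  · simpa only [mul_comm (Rop ε _), pow_one, mul_assoc] using abs_integral_mul_Rop_le
      (fun y => (hB₁ y).trans (le_max_left B₁ B₂)) h2 h8
  · simpa only [mul_assoc] using
      abs_integral_mul_Rop_le (fun y => (hB₂ y).trans (le_max_right B₁ B₂)) h2 h8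

/-- modulation parameter bounds: if `ε ∈ L² ∩ L⁸` is small in `L²` and `a, b`
satisfy the modulation equations, then `|a| + |b| ≤ C(‖ε‖_{L²} + ‖ε‖_{L²}‖ε‖_{L⁸}⁴)`. -/
theorem modulation_parameter_bounds :
    ∃ δ C : ℝ, 0 < δ ∧ 0 < C ∧
      ∀ (ε : ℝ → ℝ) (a b : ℝ),
        MemLp ε 2 (volume : Measure ℝ) → MemLp ε 8 (volume : Measure ℝ) →
        (eLpNorm ε 2 (volume : Measure ℝ)).toReal ≤ δ →
        (a * ((∫ y : ℝ, (Q y / 2 + y * deriv Q y) ^ 2)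
              - ∫ y : ℝ, (2 * y * deriv Q y + y ^ 2 * deriv (deriv Q) y) * ε y)
          - b * ∫ y : ℝ, (y * deriv (deriv Q) y + deriv Q y) * ε y
          = (∫ y : ℝ, Lop (fun z => z * deriv (deriv Q) z + deriv Q z) y * ε y)
            - ∫ y : ℝ, Rop ε y * (y * deriv Q y)) →
        (-(a * ∫ y : ℝ, ε y * (y * Q y + (7/2) * y ^ 2 * deriv Q y + y ^ 3 * deriv (deriv Q) y))
          + b * ((∫ y : ℝ, (Q y / 2 + y * deriv Q y) ^ 2)
              - ∫ y : ℝ, (Q y / 2 + (5/2) * y * deriv Q y + y ^ 2 * deriv (deriv Q) y) * ε y)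
          = (∫ y : ℝ, Lop (fun z => Q z / 2 + (5/2) * z * deriv Q z + z ^ 2 * deriv (deriv Q) z) y
                * ε y)
            - ∫ y : ℝ, (Q y / 2 + (5/2) * y * deriv Q y + y ^ 2 * deriv (deriv Q) y) * Rop ε y) →
        |a| + |b| ≤ C * ((eLpNorm ε 2 (volume : Measure ℝ)).toReal
          + (eLpNorm ε 2 (volume : Measure ℝ)).toReal
            * (eLpNorm ε 8 (volume : Measure ℝ)).toReal ^ 4) := by
  obtain ⟨K, hK, hlinear⟩ := exists_bound_linear_terms
  obtain ⟨M, hM, hnonlinear⟩ := exists_bound_nonlinear_terms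
  have hc := integral_sq_LambdaQ_pos
  set c := ∫ y : ℝ, (Q y / 2 + y * deriv Q y) ^ 2
  refine ⟨min 1 (c / (4 * K)), 4 * (K + M) / c, by positivity, by positivity, ?_⟩
  intro ε a b h2 h8 hδ h₁ h₂
  obtain ⟨j₁, j₂, j₃, j₄, g₁, g₂⟩ := hlinear ε h2
  obtain ⟨n₁, n₂⟩ := hnonlinear ε h2 h8
  set N₂ := (eLpNorm ε 2 volume).toReal
  set N₈ := (eLpNorm ε 8 volume).toReal
  have hN₂ : 0 ≤ N₂ := ENNReal.toReal_nonneg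
  have hN₈ : 0 ≤ N₈ := ENNReal.toReal_nonneg
  have hN₂_le_one : N₂ ≤ 1 := hδ.trans (min_le_left _ _)
  have hsmall : K * N₂ ≤ c / 4 := by
    have h := hδ.trans (min_le_right _ _)
    rw [le_div_iff₀ (by positivity)] at h
    linarith
  have hres : ∀ {g r : ℝ}, |g| ≤ K * N₂ → |r| ≤ M * (N₂ ^ 2 + N₂ * N₈ ^ 4) →
      |g - r| ≤ (K + M) * (N₂ + N₂ * N₈ ^ 4) := fun {g r} hg hr => by
    have hsq : M * N₂ ^ 2 ≤ M * N₂ := mul_le_mul_of_nonneg_left (by nlinarith) hM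
    nlinarith [abs_sub g r, mul_nonneg hK.le (mul_nonneg hN₂ (pow_nonneg hN₈ 4))]
  calc |a| + |b| ≤ 4 * ((K + M) * (N₂ + N₂ * N₈ ^ 4)) / c :=
        abs_add_abs_le_of_almost_diagonal hc (j₁.trans hsmall) (j₂.trans hsmall)
          (j₃.trans hsmall) (j₄.trans hsmall) (hres g₁ n₁) (hres g₂ n₂) h₁ h₂
    _ = 4 * (K + M) / c * (N₂ + N₂ * N₈ ^ 4) := by ring

end GKdV
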